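/- The three operators Π₁ := id − 2Y₂ + ((m−2)/(m−1))Y₅, Π₂ := 2(Y₂ − Y₅), Π₃ := (m/(m−1))Y₅ on Sym²₀(ℝ^m) form a complete system of mutually orthogonal idempotents: Π_i² = Π_i for i = 1,2,3, Π_iΠ_j = 0 for i ≠ j, and Π₁ + Π₂ + Π₃ = id on Sym²₀(ℝ^m). -/

import Mathlib

open Matrix

namespace NLT

/-- `|ξ|²`, the squared Euclidean norm of `ξ ∈ ℝ^m`. -/
noncomputable def nsq {m : ℕ} (ξ : Fin m → ℝ) : ℝ := ∑ i, ξ i ^ 2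

/-- `(X₁φ)_{αβ} = δ_{αβ} tr φ`. -/
noncomputable def X1 {m : ℕ} (φ : Matrix (Fin m) (Fin m) ℝ) : Matrix (Fin m) (Fin m) ℝ :=
  Matrix.of fun α β => (if α = β then (1 : ℝ) else 0) * φ.trace

/-- `(X₂φ)_{αβ} = (1/(2|ξ|²)) (ξ_α (φξ)_β + ξ_β (φξ)_α)`. -/
noncomputable def X2 {m : ℕ} (ξ : Fin m → ℝ) (φ : Matrix (Fin m) (Fin m) ℝ) :
    Matrix (Fin m) (Fin m) ℝ :=
  Matrix.of fun α β => (1 / (2 * nsq ξ)) * (ξ α * φ.mulVec ξ β + ξ β * φ.mulVec ξ α)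

/-- `(X₃φ)_{αβ} = (1/|ξ|²) ξ_α ξ_β tr φ`. -/
noncomputable def X3 {m : ℕ} (ξ : Fin m → ℝ) (φ : Matrix (Fin m) (Fin m) ℝ) :
    Matrix (Fin m) (Fin m) ℝ :=
  Matrix.of fun α β => (1 / nsq ξ) * (ξ α * ξ β * φ.trace)

/-- `(X₄φ)_{αβ} = (1/|ξ|²) δ_{αβ} ⟨ξ, φξ⟩`. -/
noncomputable def X4 {m : ℕ} (ξ : Fin m → ℝ) (φ : Matrix (Fin m) (Fin m) ℝ) :
    Matrix (Fin m) (Fin m) ℝ :=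
  Matrix.of fun α β => (1 / nsq ξ) * (if α = β then (1 : ℝ) else 0) * (ξ ⬝ᵥ φ.mulVec ξ)

/-- `(X₅φ)_{αβ} = (1/|ξ|⁴) ξ_α ξ_β ⟨ξ, φξ⟩`. -/
noncomputable def X5 {m : ℕ} (ξ : Fin m → ℝ) (φ : Matrix (Fin m) (Fin m) ℝ) :
    Matrix (Fin m) (Fin m) ℝ :=
  Matrix.of fun α β => (1 / (nsq ξ) ^ 2) * (ξ α * ξ β * (ξ ⬝ᵥ φ.mulVec ξ))

/-- `Y₂ = X₂ − (1/m) X₄`, regarded on trace-free symmetric two-tensors. -/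
noncomputable def Y2 {m : ℕ} (ξ : Fin m → ℝ) (φ : Matrix (Fin m) (Fin m) ℝ) :
    Matrix (Fin m) (Fin m) ℝ :=
  X2 ξ φ - ((1 : ℝ) / m) • X4 ξ φ

/-- `Y₅ = X₅ − (1/m) X₄`, regarded on trace-free symmetric two-tensors. -/
noncomputable def Y5 {m : ℕ} (ξ : Fin m → ℝ) (φ : Matrix (Fin m) (Fin m) ℝ) :
    Matrix (Fin m) (Fin m) ℝ :=
  X5 ξ φ - ((1 : ℝ) / m) • X4 ξ φ

/-- `Π₁ = id − 2Y₂ + ((m−2)/(m−1)) Y₅`. -/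
noncomputable def Pi1 {m : ℕ} (ξ : Fin m → ℝ) (φ : Matrix (Fin m) (Fin m) ℝ) :
    Matrix (Fin m) (Fin m) ℝ :=
  φ - (2 : ℝ) • Y2 ξ φ + (((m : ℝ) - 2) / ((m : ℝ) - 1)) • Y5 ξ φ

/-- `Π₂ = 2(Y₂ − Y₅)`. -/
noncomputable def Pi2 {m : ℕ} (ξ : Fin m → ℝ) (φ : Matrix (Fin m) (Fin m) ℝ) :
    Matrix (Fin m) (Fin m) ℝ :=
  (2 : ℝ) • (Y2 ξ φ - Y5 ξ φ)

/-- `Π₃ = (m/(m−1)) Y₅`. -/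
noncomputable def Pi3 {m : ℕ} (ξ : Fin m → ℝ) (φ : Matrix (Fin m) (Fin m) ℝ) :
    Matrix (Fin m) (Fin m) ℝ :=
  ((m : ℝ) / ((m : ℝ) - 1)) • Y5 ξ φ

end NLT

/-!
`Y₂φ` and `Y₅φ` depend on `φ` only through `φξ`, and `(Y₂φ)ξ`, `(Y₅φ)ξ` are combinations of `φξ`
and `(X₅φ)ξ`, while both `Y₂` and `Y₅` send `X₅φ` to `Y₅φ`. Hence, with `c = 1 - 1/m`,
`2Y₂² = Y₂ + (2c - 1)Y₅` and `Y₂Y₅ = Y₅Y₂ = Y₅² = cY₅`. In any algebra these relations make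
`2(Y₂ - Y₅)` and `c⁻¹Y₅` orthogonal idempotents, which `1 - 2(Y₂ - Y₅) - c⁻¹Y₅ = Π₁` completes.
-/

lemma CompleteOrthogonalIdempotents.one_sub_add {R : Type*} [Ring R] {p q : R}
    (h : OrthogonalIdempotents ![p, q]) :
    CompleteOrthogonalIdempotents ![1 - (p + q), p, q] := by
  convert (CompleteOrthogonalIdempotents.equiv (finSuccEquiv 2)).mpr
    (CompleteOrthogonalIdempotents.option h) using 1
  ext i
  fin_cases i
  · simp [Fin.sum_univ_two]
  all_goals rfl

theorem orthogonalIdempotents_of_mul_eq {𝕜 R : Type*} [Field 𝕜] [Ring R] [Algebra 𝕜 R]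
    {a b : R} {c : 𝕜} (hc : c ≠ 0) (haa : (2 : 𝕜) • (a * a) = a + (2 * c - 1) • b)
    (hab : a * b = c • b) (hba : b * a = c • b) (hbb : b * b = c • b) :
    OrthogonalIdempotents ![(2 : 𝕜) • (a - b), c⁻¹ • b] := by
  have h₁₁ : (2 : 𝕜) • (a - b) * (2 : 𝕜) • (a - b) = (2 : 𝕜) • (a - b) := by
    rw [smul_mul_smul_comm, mul_sub, sub_mul, sub_mul, hab, hba, hbb]
    linear_combination (norm := module) (2 : 𝕜) • haa
  have h₁₂ : (2 : 𝕜) • (a - b) * c⁻¹ • b = 0 := by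
    rw [smul_mul_smul_comm, sub_mul, hab, hbb, sub_self, smul_zero]
  have h₂₁ : c⁻¹ • b * (2 : 𝕜) • (a - b) = 0 := by
    rw [smul_mul_smul_comm, mul_sub, hba, hbb, sub_self, smul_zero]
  have h₂₂ : c⁻¹ • b * c⁻¹ • b = c⁻¹ • b := by
    rw [smul_mul_smul_comm, hbb, smul_smul, mul_assoc, inv_mul_cancel₀ hc, mul_one]
  refine ⟨fun i => ?_, fun i j hij => ?_⟩
  · fin_cases i
    exacts [h₁₁, h₂₂]
  · fin_cases i <;> fin_cases j
    exacts [absurd rfl hij, h₁₂, h₂₁, absurd rfl hij]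

namespace NLT

variable {m : ℕ} (ξ : Fin m → ℝ)

lemma nsq_eq_dotProduct : nsq ξ = ξ ⬝ᵥ ξ := by simp [nsq, dotProduct, sq]

lemma nsq_ne_zero {ξ : Fin m → ℝ} (hξ : ξ ≠ 0) : nsq ξ ≠ 0 :=
  nsq_eq_dotProduct ξ ▸ mt dotProduct_self_eq_zero.mp hξ

lemma X2_eq (φ : Matrix (Fin m) (Fin m) ℝ) :
    X2 ξ φ = (2 * nsq ξ)⁻¹ • (vecMulVec ξ (φ *ᵥ ξ) + vecMulVec (φ *ᵥ ξ) ξ) := by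
  ext
  simp only [X2, of_apply, Matrix.smul_apply, Matrix.add_apply, vecMulVec_apply, smul_eq_mul]
  ring

lemma X4_eq (φ : Matrix (Fin m) (Fin m) ℝ) :
    X4 ξ φ = ((ξ ⬝ᵥ φ *ᵥ ξ) / nsq ξ) • 1 := by
  ext i j
  simp only [X4, of_apply, Matrix.smul_apply, one_apply, smul_eq_mul]
  ring

lemma X5_eq (φ : Matrix (Fin m) (Fin m) ℝ) :
    X5 ξ φ = ((ξ ⬝ᵥ φ *ᵥ ξ) / nsq ξ ^ 2) • vecMulVec ξ ξ := by
  ext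
  simp only [X5, of_apply, Matrix.smul_apply, vecMulVec_apply, smul_eq_mul]
  ring

variable {ξ}

lemma mulVec_X5 (φ : Matrix (Fin m) (Fin m) ℝ) :
    X5 ξ φ *ᵥ ξ = ((ξ ⬝ᵥ φ *ᵥ ξ) / nsq ξ) • ξ := by
  rw [X5_eq, smul_mulVec, vecMulVec_mulVec, op_smul_eq_smul, smul_smul, ← nsq_eq_dotProduct]
  field_simp

lemma mulVec_Y2 (hξ : nsq ξ ≠ 0) (φ : Matrix (Fin m) (Fin m) ℝ) :
    Y2 ξ φ *ᵥ ξ = ((1 / 2 : ℝ) • φ + (1 / 2 - 1 / m : ℝ) • X5 ξ φ) *ᵥ ξ := by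
  rw [Y2, X2_eq, X4_eq, X5_eq]
  simp only [sub_mulVec, add_mulVec, smul_mulVec, vecMulVec_mulVec, one_mulVec, op_smul_eq_smul,
    ← nsq_eq_dotProduct, dotProduct_comm (φ *ᵥ ξ) ξ]
  ext i
  simp only [Pi.add_apply, Pi.sub_apply, Pi.smul_apply, smul_eq_mul]
  field_simp
  ring

lemma mulVec_Y5 (φ : Matrix (Fin m) (Fin m) ℝ) :
    Y5 ξ φ *ᵥ ξ = ((1 - 1 / m : ℝ) • X5 ξ φ) *ᵥ ξ := by
  rw [Y5, X5_eq, X4_eq]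
  simp only [sub_mulVec, smul_mulVec, vecMulVec_mulVec, one_mulVec, op_smul_eq_smul,
    ← nsq_eq_dotProduct]
  ext i
  simp only [Pi.sub_apply, Pi.smul_apply, smul_eq_mul]
  field_simp

lemma X2_X5 (φ : Matrix (Fin m) (Fin m) ℝ) : X2 ξ (X5 ξ φ) = X5 ξ φ := by
  rw [X2_eq, mulVec_X5, X5_eq, vecMulVec_smul, smul_vecMulVec, ← two_smul ℝ, smul_smul, smul_smul]
  congr 1
  field_simp

lemma X4_X5 (φ : Matrix (Fin m) (Fin m) ℝ) : X4 ξ (X5 ξ φ) = X4 ξ φ := by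
  rw [X4_eq, X4_eq, mulVec_X5, dotProduct_smul, ← nsq_eq_dotProduct, smul_eq_mul]
  field_simp

lemma X5_X5 (φ : Matrix (Fin m) (Fin m) ℝ) : X5 ξ (X5 ξ φ) = X5 ξ φ := by
  rw [X5_eq ξ (X5 ξ φ), mulVec_X5, X5_eq, dotProduct_smul, ← nsq_eq_dotProduct, smul_eq_mul]
  congr 1
  field_simp

lemma Y2_X5 (φ : Matrix (Fin m) (Fin m) ℝ) : Y2 ξ (X5 ξ φ) = Y5 ξ φ := by
  rw [Y2, Y5, X2_X5, X4_X5]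

lemma Y5_X5 (φ : Matrix (Fin m) (Fin m) ℝ) : Y5 ξ (X5 ξ φ) = Y5 ξ φ := by
  rw [Y5, Y5, X5_X5, X4_X5]

lemma Y2_congr {φ ψ : Matrix (Fin m) (Fin m) ℝ} (h : φ *ᵥ ξ = ψ *ᵥ ξ) : Y2 ξ φ = Y2 ξ ψ := by
  simp only [Y2, X2, X4, h]

lemma Y5_congr {φ ψ : Matrix (Fin m) (Fin m) ℝ} (h : φ *ᵥ ξ = ψ *ᵥ ξ) : Y5 ξ φ = Y5 ξ ψ := by
  simp only [Y5, X5, X4, h]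

variable (ξ)

noncomputable def Y2ₗ : Module.End ℝ (Matrix (Fin m) (Fin m) ℝ) where
  toFun := Y2 ξ
  map_add' φ ψ := by
    simp only [Y2, X2_eq, X4_eq, add_mulVec, dotProduct_add, vecMulVec_add, add_vecMulVec]
    module
  map_smul' c φ := by
    simp only [Y2, X2_eq, X4_eq, smul_mulVec, dotProduct_smul, vecMulVec_smul, smul_vecMulVec,
      smul_eq_mul, RingHom.id_apply]
    module

noncomputable def Y5ₗ : Module.End ℝ (Matrix (Fin m) (Fin m) ℝ) where
  toFun := Y5 ξ
  map_add' φ ψ := by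
    simp only [Y5, X5_eq, X4_eq, add_mulVec, dotProduct_add]
    module
  map_smul' c φ := by
    simp only [Y5, X5_eq, X4_eq, smul_mulVec, dotProduct_smul, smul_eq_mul, RingHom.id_apply]
    module

@[simp] lemma Y2ₗ_apply (φ : Matrix (Fin m) (Fin m) ℝ) : Y2ₗ ξ φ = Y2 ξ φ := rfl

@[simp] lemma Y5ₗ_apply (φ : Matrix (Fin m) (Fin m) ℝ) : Y5ₗ ξ φ = Y5 ξ φ := rfl

variable {ξ}

lemma two_smul_Y2ₗ_mul_Y2ₗ (hξ : nsq ξ ≠ 0) :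
    (2 : ℝ) • (Y2ₗ ξ * Y2ₗ ξ) = Y2ₗ ξ + (2 * (1 - 1 / m) - 1 : ℝ) • Y5ₗ ξ := by
  ext1 φ
  calc (2 : ℝ) • Y2ₗ ξ (Y2 ξ φ)
      = (2 : ℝ) • Y2ₗ ξ ((1 / 2 : ℝ) • φ + (1 / 2 - 1 / m : ℝ) • X5 ξ φ) := by
        rw [Y2ₗ_apply, Y2ₗ_apply, Y2_congr (mulVec_Y2 hξ φ)]
    _ = Y2 ξ φ + (2 * (1 - 1 / m) - 1 : ℝ) • Y5 ξ φ := by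
        rw [map_add, map_smul, map_smul, Y2ₗ_apply, Y2ₗ_apply, Y2_X5]
        module

lemma Y2ₗ_mul_Y5ₗ : Y2ₗ ξ * Y5ₗ ξ = (1 - 1 / m : ℝ) • Y5ₗ ξ := by
  ext1 φ
  calc Y2ₗ ξ (Y5 ξ φ) = Y2ₗ ξ ((1 - 1 / m : ℝ) • X5 ξ φ) := by
        rw [Y2ₗ_apply, Y2ₗ_apply, Y2_congr (mulVec_Y5 φ)]
    _ = (1 - 1 / m : ℝ) • Y5 ξ φ := by rw [map_smul, Y2ₗ_apply, Y2_X5]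

lemma Y5ₗ_mul_Y2ₗ (hξ : nsq ξ ≠ 0) : Y5ₗ ξ * Y2ₗ ξ = (1 - 1 / m : ℝ) • Y5ₗ ξ := by
  ext1 φ
  calc Y5ₗ ξ (Y2 ξ φ) = Y5ₗ ξ ((1 / 2 : ℝ) • φ + (1 / 2 - 1 / m : ℝ) • X5 ξ φ) := by
        rw [Y5ₗ_apply, Y5ₗ_apply, Y5_congr (mulVec_Y2 hξ φ)]
    _ = (1 - 1 / m : ℝ) • Y5 ξ φ := by
        rw [map_add, map_smul, map_smul, Y5ₗ_apply, Y5ₗ_apply, Y5_X5]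
        module

lemma Y5ₗ_mul_Y5ₗ : Y5ₗ ξ * Y5ₗ ξ = (1 - 1 / m : ℝ) • Y5ₗ ξ := by
  ext1 φ
  calc Y5ₗ ξ (Y5 ξ φ) = Y5ₗ ξ ((1 - 1 / m : ℝ) • X5 ξ φ) := by
        rw [Y5ₗ_apply, Y5ₗ_apply, Y5_congr (mulVec_Y5 φ)]
    _ = (1 - 1 / m : ℝ) • Y5 ξ φ := by rw [map_smul, Y5ₗ_apply, Y5_X5]

variable (ξ)

noncomputable def Pi2ₗ : Module.End ℝ (Matrix (Fin m) (Fin m) ℝ) := (2 : ℝ) • (Y2ₗ ξ - Y5ₗ ξ)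

noncomputable def Pi3ₗ : Module.End ℝ (Matrix (Fin m) (Fin m) ℝ) := (1 - 1 / m : ℝ)⁻¹ • Y5ₗ ξ

noncomputable def Pi1ₗ : Module.End ℝ (Matrix (Fin m) (Fin m) ℝ) := 1 - (Pi2ₗ ξ + Pi3ₗ ξ)

variable {ξ}

lemma Pi2ₗ_apply (φ : Matrix (Fin m) (Fin m) ℝ) : Pi2ₗ ξ φ = Pi2 ξ φ := rfl

lemma Pi3ₗ_apply (hm : 1 < m) (φ : Matrix (Fin m) (Fin m) ℝ) : Pi3ₗ ξ φ = Pi3 ξ φ := by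
  have : (1 : ℝ) < m := by exact_mod_cast hm
  rw [Pi3ₗ, Pi3, LinearMap.smul_apply, Y5ₗ_apply]
  congr 1
  field_simp

lemma Pi1ₗ_apply (hm : 1 < m) (φ : Matrix (Fin m) (Fin m) ℝ) : Pi1ₗ ξ φ = Pi1 ξ φ := by
  have hm₁ : (m : ℝ) - 1 ≠ 0 := (sub_pos.mpr (by exact_mod_cast hm)).ne'
  have hcoeff : ((m : ℝ) - 2) / (m - 1) = 2 - (1 - 1 / (m : ℝ))⁻¹ := by field_simp; ring
  rw [Pi1ₗ, Pi1, hcoeff, Pi2ₗ, Pi3ₗ]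
  simp only [LinearMap.sub_apply, LinearMap.add_apply, LinearMap.smul_apply, Module.End.one_apply,
    Y2ₗ_apply, Y5ₗ_apply]
  module

theorem completeOrthogonalIdempotents_Piₗ (hm : 1 < m) (hξ : ξ ≠ 0) :
    CompleteOrthogonalIdempotents ![Pi1ₗ ξ, Pi2ₗ ξ, Pi3ₗ ξ] := by
  have hc : (1 - 1 / m : ℝ) ≠ 0 :=
    (sub_pos.mpr ((div_lt_one (by positivity)).mpr (by exact_mod_cast hm))).ne'
  exact CompleteOrthogonalIdempotents.one_sub_add <| orthogonalIdempotents_of_mul_eq hc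
    (two_smul_Y2ₗ_mul_Y2ₗ (nsq_ne_zero hξ)) Y2ₗ_mul_Y5ₗ (Y5ₗ_mul_Y2ₗ (nsq_ne_zero hξ)) Y5ₗ_mul_Y5ₗ

theorem Pi_complete_orthogonal_idempotents_general (m : ℕ) (hm : 2 ≤ m) (ξ : Fin m → ℝ) (hξ : ξ ≠ 0)
    (φ : Matrix (Fin m) (Fin m) ℝ) :
    Pi1 ξ (Pi1 ξ φ) = Pi1 ξ φ ∧
    Pi2 ξ (Pi2 ξ φ) = Pi2 ξ φ ∧
    Pi3 ξ (Pi3 ξ φ) = Pi3 ξ φ ∧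
    Pi1 ξ (Pi2 ξ φ) = 0 ∧
    Pi2 ξ (Pi1 ξ φ) = 0 ∧
    Pi1 ξ (Pi3 ξ φ) = 0 ∧
    Pi3 ξ (Pi1 ξ φ) = 0 ∧
    Pi2 ξ (Pi3 ξ φ) = 0 ∧
    Pi3 ξ (Pi2 ξ φ) = 0 ∧
    Pi1 ξ φ + Pi2 ξ φ + Pi3 ξ φ = φ := by
  obtain ⟨⟨idem, ortho⟩, complete⟩ := completeOrthogonalIdempotents_Piₗ hm hξ
  simp only [← Pi1ₗ_apply hm, ← Pi2ₗ_apply, ← Pi3ₗ_apply hm]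
  rw [Fin.sum_univ_three] at complete
  have ortho' (i j : Fin 3) (hij : i ≠ j) := LinearMap.congr_fun (ortho hij) φ
  exact ⟨LinearMap.congr_fun (idem 0).eq φ, LinearMap.congr_fun (idem 1).eq φ,
    LinearMap.congr_fun (idem 2).eq φ, ortho' 0 1 (by decide), ortho' 1 0 (by decide),
    ortho' 0 2 (by decide), ortho' 2 0 (by decide), ortho' 1 2 (by decide), ortho' 2 1 (by decide),
    LinearMap.congr_fun complete φ⟩

/-- `Π₁, Π₂, Π₃` form a complete system of mutually orthogonal idempotents
on trace-free symmetric two-tensors. -/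
theorem Pi_complete_orthogonal_idempotents (m : ℕ) (hm : 2 ≤ m) (ξ : Fin m → ℝ) (hξ : ξ ≠ 0)
    (φ : Matrix (Fin m) (Fin m) ℝ) (hφ : φ.IsSymm) (hφ0 : φ.trace = 0) :
    Pi1 ξ (Pi1 ξ φ) = Pi1 ξ φ ∧
    Pi2 ξ (Pi2 ξ φ) = Pi2 ξ φ ∧
    Pi3 ξ (Pi3 ξ φ) = Pi3 ξ φ ∧
    Pi1 ξ (Pi2 ξ φ) = 0 ∧
    Pi2 ξ (Pi1 ξ φ) = 0 ∧
    Pi1 ξ (Pi3 ξ φ) = 0 ∧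
    Pi3 ξ (Pi1 ξ φ) = 0 ∧
    Pi2 ξ (Pi3 ξ φ) = 0 ∧
    Pi3 ξ (Pi2 ξ φ) = 0 ∧
    Pi1 ξ φ + Pi2 ξ φ + Pi3 ξ φ = φ :=
  Pi_complete_orthogonal_idempotents_general m hm ξ hξ φ

end NLT
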